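/- arXiv:2602.08464 — 4 statements merged into one kernel-verified Lean document; each statement's English description precedes it below -/
import Mathlib

section
/- Pauli twirling diagonalizes a channel written in the Pauli basis: let q : V × V → ℂ and let E be the linear map on 2^n×2^n complex matrices E(ρ) = Σ_{b,c ∈ V} q(b,c) · P_b ρ P_c. Define the Pauli twirl E^P(ρ) = 4^{-n} Σ_{a ∈ V} P_a · E(P_a ρ P_a) · P_a. Then for every matrix ρ, E^P(ρ) = Σ_{b ∈ V} q(b,b) · P_b ρ P_b, i.e. the twirled map is the Pauli channel with coefficients given by the diagonal of q. -/
/-- Index set of `n`-qubit Pauli words. -/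
abbrev V (n : ℕ) : Type := (Fin n → ZMod 2) × (Fin n → ZMod 2)

/-- Symplectic inner product `⟨a,b⟩ = Σᵢ (aₓᵢ·b_zᵢ + a_zᵢ·bₓᵢ) ∈ ZMod 2`. -/
def sform {n : ℕ} (a b : V n) : ZMod 2 := ∑ i, (a.1 i * b.2 i + a.2 i * b.1 i)

/-- The sign `χ(a,b) = (−1)^⟨a,b⟩ ∈ ℝ`. -/
noncomputable def chi {n : ℕ} (a b : V n) : ℝ := (-1 : ℝ) ^ (sform a b).val

/-- Integer (real-valued) lift `⟨a,b⟩_ℤ ∈ {0,1} ⊂ ℝ`. -/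
noncomputable def sformZ {n : ℕ} (a b : V n) : ℝ := ((sform a b).val : ℝ)

/-- The single-qubit Pauli factor `i^(aₓ·a_z) · X^(aₓ) · Z^(a_z)`. -/
noncomputable def pauli1 (ax az : ZMod 2) : Matrix (Fin 2) (Fin 2) ℂ :=
  (Complex.I ^ (ax.val * az.val)) •
    ((!![0, 1; 1, 0] : Matrix (Fin 2) (Fin 2) ℂ) ^ ax.val *
     (!![1, 0; 0, -1] : Matrix (Fin 2) (Fin 2) ℂ) ^ az.val)

/-- The space of `2^n × 2^n` complex matrices (indexed by `Fin n → Fin 2`). -/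
abbrev Mq (n : ℕ) : Type := Matrix (Fin n → Fin 2) (Fin n → Fin 2) ℂ

/-- The `n`-qubit Pauli word `P_a`, the Kronecker product over `i ∈ Fin n`
of `i^(aₓᵢ·a_zᵢ)·X^(aₓᵢ)·Z^(a_zᵢ)`. -/
noncomputable def P {n : ℕ} (a : V n) : Mq n :=
  Matrix.of fun x y => ∏ i, pauli1 (a.1 i) (a.2 i) (x i) (y i)

/-! Conjugation by `P a` multiplies `P b` by the sign `(-1)^⟨a,b⟩`, so the `a`-th summand of the
twirl of `ρ ↦ P b ρ P c` carries the sign `(-1)^⟨a,b+c⟩`. The symplectic form is nondegenerate,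
hence for `b ≠ c` the map `a ↦ (-1)^⟨a,b+c⟩` is a nontrivial character of `V n` and sums to zero;
only the diagonal terms `b = c` survive, each with weight `|V n| = 4^n`. -/

section piKron

variable {ι m R : Type*} [Fintype ι] [CommSemiring R]

def piKron (A : ι → Matrix m m R) : Matrix (ι → m) (ι → m) R :=
  Matrix.of fun x y => ∏ i, A i (x i) (y i)

theorem piKron_mul [DecidableEq ι] [Fintype m] (A B : ι → Matrix m m R) :
    piKron A * piKron B = piKron fun i => A i * B i := by
  ext x y
  simp only [piKron, Matrix.mul_apply, Matrix.of_apply, Finset.prod_univ_sum,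
    Fintype.piFinset_univ, Finset.prod_mul_distrib]

theorem piKron_smul (c : ι → R) (A : ι → Matrix m m R) :
    piKron (fun i => c i • A i) = (∏ i, c i) • piKron A := by
  ext x y
  simp [piKron, Finset.prod_mul_distrib]

end piKron

theorem AddChar.map_sum_eq_prod {ι A M : Type*} [AddCommMonoid A] [CommMonoid M]
    (ψ : AddChar A M) (s : Finset ι) (f : ι → A) : ψ (∑ i ∈ s, f i) = ∏ i ∈ s, ψ (f i) := by
  induction s using Finset.cons_induction with
  | empty => simp
  | cons a s _ ih => rw [Finset.sum_cons, Finset.prod_cons, AddChar.map_add_eq_mul, ih]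

noncomputable def signChar : AddChar (ZMod 2) ℂ :=
  AddChar.zmodChar 2 (by norm_num : (-1 : ℂ) ^ 2 = 1)

theorem signChar_eq_ite (x : ZMod 2) : signChar x = if x = 0 then 1 else -1 := by
  obtain rfl | rfl : x = 0 ∨ x = 1 := by decide +revert
  · simp
  · exact (AddChar.zmodChar_apply _ 1).trans (pow_one _)

theorem pauli1_conj (ax az bx bz : ZMod 2) :
    pauli1 ax az * pauli1 bx bz * pauli1 ax az
      = signChar (ax * bz + az * bx) • pauli1 bx bz := by
  fin_cases ax <;> fin_cases az <;> fin_cases bx <;> fin_cases bz <;> ext i j <;>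
    fin_cases i <;> fin_cases j <;>
    simp +decide [pauli1, signChar_eq_ite, Matrix.mul_apply, Fin.sum_univ_two, ZMod.val]

section Pauli

variable {n : ℕ}

theorem P_eq_piKron (a : V n) : P a = piKron fun i => pauli1 (a.1 i) (a.2 i) := rfl

theorem P_conj (a b : V n) : P a * P b * P a = signChar (sform a b) • P b := by
  simp only [P_eq_piKron, piKron_mul, pauli1_conj, piKron_smul, sform, AddChar.map_sum_eq_prod]

theorem sform_add_left (a b c : V n) : sform (a + b) c = sform a c + sform b c := by
  simp only [sform, Prod.fst_add, Prod.snd_add, Pi.add_apply, ← Finset.sum_add_distrib]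
  exact Finset.sum_congr rfl fun i _ => by ring

theorem sform_add_right (a b c : V n) : sform a (b + c) = sform a b + sform a c := by
  simp only [sform, Prod.fst_add, Prod.snd_add, Pi.add_apply, ← Finset.sum_add_distrib]
  exact Finset.sum_congr rfl fun i _ => by ring

theorem eq_zero_of_forall_sform_eq_zero {d : V n} (h : ∀ e, sform e d = 0) : d = 0 := by
  ext i
  · simpa [sform, Pi.single_apply] using h (0, Pi.single i 1)
  · simpa [sform, Pi.single_apply] using h (Pi.single i 1, 0)

noncomputable def sformChar (d : V n) : AddChar (V n) ℂ :=
  signChar.compAddMonoidHom (AddMonoidHom.mk' (sform · d) fun a b => sform_add_left a b d)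

theorem sformChar_apply (d a : V n) : sformChar d a = signChar (sform a d) := rfl

-- `0 : AddChar _ _` is the trivial character `fun _ => 1`.
theorem sformChar_eq_zero_iff {d : V n} : sformChar d = 0 ↔ d = 0 := by
  refine ⟨fun h => eq_zero_of_forall_sform_eq_zero fun e => ?_, ?_⟩
  · have he := DFunLike.congr_fun h e
    rw [sformChar_apply, AddChar.zero_apply, signChar_eq_ite] at he
    by_contra hne
    norm_num [if_neg hne] at he
  · rintro rfl
    ext a
    simp [sformChar_apply, sform]

theorem card_V : Fintype.card (V n) = 4 ^ n := by
  simp [Fintype.card_prod, ← mul_pow]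

theorem sum_signChar_sform_mul (b c : V n) :
    ∑ a : V n, signChar (sform a b) * signChar (sform a c) = if b = c then 4 ^ n else 0 := by
  have hneg : -c = c := by ext <;> simp [ZMod.neg_eq_self_mod_two]
  calc ∑ a : V n, signChar (sform a b) * signChar (sform a c) = ∑ a, sformChar (b + c) a := by
        simp only [sformChar_apply, sform_add_right, AddChar.map_add_eq_mul]
    _ = if b = c then 4 ^ n else 0 := by
        rw [AddChar.sum_eq_ite, card_V]
        simp [sformChar_eq_zero_iff, add_eq_zero_iff_eq_neg, hneg]

theorem sum_P_conj_sandwich (b c : V n) (ρ : Mq n) :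
    ∑ a : V n, P a * (P b * (P a * ρ * P a) * P c) * P a
      = (if b = c then (4 : ℂ) ^ n else 0) • (P b * ρ * P c) := by
  have hconj (a : V n) : P a * (P b * (P a * ρ * P a) * P c) * P a
      = (P a * P b * P a) * ρ * (P a * P c * P a) := by
    simp only [Matrix.mul_assoc]
  simp only [hconj, P_conj, Matrix.smul_mul, Matrix.mul_smul, smul_smul, ← Finset.sum_smul,
    sum_signChar_sform_mul, eq_comm]

end Pauli

theorem pauli_twirl_diagonalizes_general (n : ℕ) (q : V n × V n → ℂ)
    (E : Mq n → Mq n)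
    (hE : ∀ ρ : Mq n, E ρ = ∑ b : V n, ∑ c : V n, q (b, c) • (P b * ρ * P c))
    (ρ : Mq n) :
    ((4 : ℂ) ^ n)⁻¹ • (∑ a : V n, P a * E (P a * ρ * P a) * P a)
      = ∑ b : V n, q (b, b) • (P b * ρ * P b) := by
  have hexpand : ∑ a : V n, P a * E (P a * ρ * P a) * P a
      = ∑ b : V n, ∑ c : V n, q (b, c) • ∑ a : V n, P a * (P b * (P a * ρ * P a) * P c) * P a := by
    simp only [hE, Matrix.mul_sum, Matrix.sum_mul, Matrix.mul_smul, Matrix.smul_mul,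
      Finset.smul_sum]
    rw [Finset.sum_comm]
    exact Finset.sum_congr rfl fun b _ => Finset.sum_comm
  rw [hexpand, Finset.smul_sum]
  refine Finset.sum_congr rfl fun b _ => ?_
  simp only [sum_P_conj_sandwich, ite_smul, zero_smul, smul_ite, smul_zero, Finset.sum_ite_eq,
    Finset.mem_univ, if_true, smul_smul]
  rw [mul_comm (q _), inv_mul_cancel_left₀ (by norm_num)]

theorem pauli_twirl_diagonalizes (n : ℕ) (hn : 1 ≤ n) (q : V n × V n → ℂ)
    (E : Mq n → Mq n)
    (hE : ∀ ρ : Mq n, E ρ = ∑ b : V n, ∑ c : V n, q (b, c) • (P b * ρ * P c))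
    (ρ : Mq n) :
    ((4 : ℂ) ^ n)⁻¹ • (∑ a : V n, P a * E (P a * ρ * P a) * P a)
      = ∑ b : V n, q (b, b) • (P b * ρ * P b) :=
  pauli_twirl_diagonalizes_general n q E hE ρ
end

section
/- Pauli eigenvalues of a Pauli-Lindblad channel: let λ : V → ℝ, let L be the linear map on 2^n×2^n complex matrices L(ρ) = Σ_{a ∈ V} λ_a·(P_a ρ P_a − ρ), and let exp(L) denote the exponential of L as a linear endomorphism. Then for every b ∈ V, exp(L)(P_b) = exp(−2 Σ_{k ∈ V} λ_k·⟨b,k⟩_ℤ)·P_b; equivalently the Pauli eigenvalue f_b = 2^{-n}·trace(P_b · exp(L)(P_b)) equals exp(−2 Σ_{k ∈ V} λ_k·⟨b,k⟩_ℤ). -/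
attribute [local instance] Matrix.linftyOpNormedAddCommGroup Matrix.linftyOpNormedRing
  Matrix.linftyOpNormedAlgebra

/-- Port helper: `Mq n →L[ℂ] Mq n` is a topological ring (via the operator-norm normed ring);
instance search no longer finds this by itself. -/
instance Mq.clm_isTopologicalRing (n : ℕ) : IsTopologicalRing (Mq n →L[ℂ] Mq n) :=
  @NonUnitalSeminormedRing.toIsTopologicalRing _
    (ContinuousLinearMap.toNormedRing (E := Mq n) (𝕜 := ℂ)).toSeminormedRing.toNonUnitalSeminormedRing

/-!
Conjugation by a Pauli word is a sign: `P_a P_b P_a = (-1)^⟨a,b⟩ P_b`, so every summand of the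
Lindbladian maps `P_b` to `λ_a ((-1)^⟨a,b⟩ - 1) P_b = -2 λ_a ⟨b,a⟩_ℤ P_b`. Hence `P_b` is an
eigenvector of `L` with eigenvalue `-2 Σ_k λ_k ⟨b,k⟩_ℤ`, and therefore of `exp L` with the
exponential of that eigenvalue. The trace formula follows from `P_b² = 1` and `tr 1 = 2^n`.
-/

namespace Matrix

variable {ι m R : Type*} [Fintype ι] [CommSemiring R]

def piKronecker (A : ι → Matrix m m R) : Matrix (ι → m) (ι → m) R :=
  of fun x y => ∏ i, A i (x i) (y i)

theorem piKronecker_mul [DecidableEq ι] [Fintype m] (A B : ι → Matrix m m R) :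
    piKronecker A * piKronecker B = piKronecker (A * B) := by
  ext x y
  simp only [piKronecker, mul_apply, of_apply, Pi.mul_apply, Fintype.prod_sum,
    ← Finset.prod_mul_distrib]

theorem piKronecker_one [DecidableEq m] : piKronecker (1 : ι → Matrix m m R) = 1 := by
  ext x y
  by_cases hxy : x = y
  · subst hxy
    simp [piKronecker]
  · obtain ⟨i, hi⟩ := Function.ne_iff.mp hxy
    rw [one_apply_ne hxy]
    exact Finset.prod_eq_zero (Finset.mem_univ i) (by simp [hi])

theorem piKronecker_smul (c : ι → R) (A : ι → Matrix m m R) :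
    piKronecker (c • A) = (∏ i, c i) • piKronecker A := by
  ext x y
  simp [piKronecker, Finset.prod_mul_distrib]

end Matrix

section SignOfZModTwo

variable {R : Type*}

theorem neg_one_pow_val_add [Ring R] (s t : ZMod 2) :
    (-1 : R) ^ (s + t).val = (-1 : R) ^ s.val * (-1 : R) ^ t.val := by
  rw [ZMod.val_add, ← pow_add, ← neg_one_pow_eq_pow_mod_two]

theorem neg_one_pow_val_sum {ι : Type*} [CommRing R] (s : Finset ι)
    (f : ι → ZMod 2) : (-1 : R) ^ (∑ i ∈ s, f i).val = ∏ i ∈ s, (-1 : R) ^ (f i).val := by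
  induction s using Finset.cons_induction with
  | empty => simp
  | cons a s ha ih => rw [Finset.sum_cons, Finset.prod_cons, neg_one_pow_val_add, ih]

theorem neg_one_pow_val_sub_one [Ring R] (s : ZMod 2) :
    (-1 : R) ^ s.val - 1 = -2 * (s.val : R) := by
  fin_cases s <;> norm_num [ZMod.val]

end SignOfZModTwo

theorem pauli1_mul_self (a c : ZMod 2) : pauli1 a c * pauli1 a c = 1 := by
  fin_cases a <;> fin_cases c <;> ext i j <;> fin_cases i <;> fin_cases j <;>
    simp +decide [pauli1, Matrix.mul_apply, Matrix.one_apply, ZMod.val]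

theorem pauli1_mul_comm (a c b d : ZMod 2) :
    pauli1 a c * pauli1 b d = (-1 : ℂ) ^ (a * d + c * b).val • (pauli1 b d * pauli1 a c) := by
  fin_cases a <;> fin_cases c <;> fin_cases b <;> fin_cases d <;> ext i j <;>
    fin_cases i <;> fin_cases j <;> simp +decide [pauli1, Matrix.mul_apply, ZMod.val]

theorem sform_comm {n : ℕ} (a b : V n) : sform a b = sform b a :=
  Finset.sum_congr rfl fun _ _ => by ring

theorem P_eq_piKronecker {n : ℕ} (a : V n) :
    P a = Matrix.piKronecker fun i => pauli1 (a.1 i) (a.2 i) := rfl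

theorem P_mul_self {n : ℕ} (a : V n) : P a * P a = 1 := by
  rw [P_eq_piKronecker, Matrix.piKronecker_mul, ← Matrix.piKronecker_one]
  exact congrArg _ (funext fun i => pauli1_mul_self _ _)

theorem P_mul_comm {n : ℕ} (a b : V n) :
    P a * P b = (-1 : ℂ) ^ (sform a b).val • (P b * P a) := by
  have factorwise : ((fun i => pauli1 (a.1 i) (a.2 i)) * fun i => pauli1 (b.1 i) (b.2 i))
      = (fun i => (-1 : ℂ) ^ (a.1 i * b.2 i + a.2 i * b.1 i).val) •
          ((fun i => pauli1 (b.1 i) (b.2 i)) * fun i => pauli1 (a.1 i) (a.2 i)) :=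
    funext fun i => pauli1_mul_comm _ _ _ _
  rw [P_eq_piKronecker, P_eq_piKronecker, Matrix.piKronecker_mul, Matrix.piKronecker_mul,
    factorwise, Matrix.piKronecker_smul, sform, neg_one_pow_val_sum]

theorem P_mul_mul_self {n : ℕ} (a b : V n) :
    P a * P b * P a = (-1 : ℂ) ^ (sform a b).val • P b := by
  rw [P_mul_comm, Matrix.smul_mul, mul_assoc, P_mul_self, mul_one]

theorem trace_P_mul_self {n : ℕ} (a : V n) : Matrix.trace (P a * P a) = 2 ^ n := by
  simp [P_mul_self]

theorem sum_smul_P_mul_mul_P_sub {n : ℕ} (lam : V n → ℝ) (b : V n) :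
    ∑ a : V n, (lam a : ℂ) • (P a * P b * P a - P b)
      = ((-2 * ∑ k : V n, lam k * sformZ b k : ℝ) : ℂ) • P b := by
  have conj_sub (a : V n) : P a * P b * P a - P b = (-2 * sformZ b a : ℂ) • P b := by
    rw [P_mul_mul_self, sform_comm, sformZ, Complex.ofReal_natCast, ← neg_one_pow_val_sub_one,
      sub_smul, one_smul]
  simp only [conj_sub, smul_smul, ← Finset.sum_smul, Finset.mul_sum]
  push_cast
  congr 1
  exact Finset.sum_congr rfl fun _ _ => by ring

theorem NormedSpace.exp_apply_of_apply_eq_smul {𝕂 E : Type*} [RCLike 𝕂] [NormedAddCommGroup E]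
    [NormedSpace 𝕂 E] [CompleteSpace E] {L : E →L[𝕂] E} {x : E} {μ : 𝕂} (h : L x = μ • x) :
    NormedSpace.exp L x = NormedSpace.exp μ • x := by
  have pow_apply (k : ℕ) : (L ^ k) x = μ ^ k • x := by
    induction k with
    | zero => simp
    | succ k ih => rw [pow_succ', mul_apply_eq_comp, ih, map_smul, h, smul_smul, pow_succ]
  have hL := (NormedSpace.exp_series_hasSum_exp' (𝕂 := 𝕂) L).mapL (ContinuousLinearMap.apply 𝕂 E x)
  have hμ := (NormedSpace.exp_series_hasSum_exp' (𝕂 := 𝕂) μ).smul_const x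
  simp only [ContinuousLinearMap.apply_apply, smul_apply, pow_apply, smul_smul] at hL
  exact hL.unique (by simpa only [smul_eq_mul] using hμ)

theorem pauli_eigenvalues_of_PL_channel_general (n : ℕ) (lam : V n → ℝ)
    (L : Mq n →L[ℂ] Mq n)
    (hL : ∀ ρ : Mq n, L ρ = ∑ a : V n, (lam a : ℂ) • (P a * ρ * P a - ρ)) (b : V n) :
    NormedSpace.exp L (P b)
        = ((Real.exp (-2 * ∑ k : V n, lam k * sformZ b k) : ℝ) : ℂ) • P b ∧
      ((2 : ℂ) ^ n)⁻¹ * Matrix.trace (P b * NormedSpace.exp L (P b))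
        = ((Real.exp (-2 * ∑ k : V n, lam k * sformZ b k) : ℝ) : ℂ) := by
  have eigen : L (P b) = ((-2 * ∑ k : V n, lam k * sformZ b k : ℝ) : ℂ) • P b := by
    rw [hL, sum_smul_P_mul_mul_P_sub]
  have exp_L : NormedSpace.exp L (P b)
      = ((Real.exp (-2 * ∑ k : V n, lam k * sformZ b k) : ℝ) : ℂ) • P b := by
    rw [Complex.ofReal_exp, Complex.exp_eq_exp_ℂ]
    exact NormedSpace.exp_apply_of_apply_eq_smul eigen
  refine ⟨exp_L, ?_⟩
  rw [exp_L, Matrix.mul_smul, Matrix.trace_smul, trace_P_mul_self, smul_eq_mul,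
    mul_comm _ ((2 : ℂ) ^ n), inv_mul_cancel_left₀ (pow_ne_zero n two_ne_zero)]

theorem pauli_eigenvalues_of_PL_channel (n : ℕ) (hn : 1 ≤ n) (lam : V n → ℝ)
    (L : Mq n →L[ℂ] Mq n)
    (hL : ∀ ρ : Mq n, L ρ = ∑ a : V n, (lam a : ℂ) • (P a * ρ * P a - ρ)) (b : V n) :
    NormedSpace.exp L (P b)
        = ((Real.exp (-2 * ∑ k : V n, lam k * sformZ b k) : ℝ) : ℂ) • P b ∧
      ((2 : ℂ) ^ n)⁻¹ * Matrix.trace (P b * NormedSpace.exp L (P b))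
        = ((Real.exp (-2 * ∑ k : V n, lam k * sformZ b k) : ℝ) : ℂ) :=
  pauli_eigenvalues_of_PL_channel_general n lam L hL b
end

section
/- The set of Pauli channels is the closure of the set of generalized Pauli-Lindblad channels (Proposition 1, in probability-vector form): in the finite-dimensional space ℝ^V, the closure of the set S = {p : V → ℝ | p_a ≥ 0 for all a, Σ_a p_a = 1, and for every a ∈ V, Σ_{k ∈ V} χ(a,k)·p_k ≠ 0} equals the full probability simplex Δ = {p : V → ℝ | p_a ≥ 0 for all a, Σ_a p_a = 1}. -/
lemma chi_zero_right {n : ℕ} (a : V n) : chi a 0 = 1 := by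
  have h : sform a 0 = 0 := by simp [sform]
  simp [chi, h]

theorem pauli_channels_closure_of_generalized_PL (n : ℕ) (hn : 1 ≤ n) :
    closure {p : V n → ℝ | (∀ a : V n, 0 ≤ p a) ∧ (∑ a : V n, p a) = 1 ∧
        ∀ a : V n, (∑ k : V n, chi a k * p k) ≠ 0}
      = {p : V n → ℝ | (∀ a : V n, 0 ≤ p a) ∧ (∑ a : V n, p a) = 1} := by
  set S := {p : V n → ℝ | (∀ a : V n, 0 ≤ p a) ∧ (∑ a : V n, p a) = 1 ∧
        ∀ a : V n, (∑ k : V n, chi a k * p k) ≠ 0}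
  set Δ := {p : V n → ℝ | (∀ a : V n, 0 ≤ p a) ∧ (∑ a : V n, p a) = 1}
  have hΔclosed : IsClosed Δ := by
    have h1 : IsClosed {p : V n → ℝ | ∀ a : V n, 0 ≤ p a} := by
      have : {p : V n → ℝ | ∀ a : V n, 0 ≤ p a} = ⋂ a : V n, {p | 0 ≤ p a} := by
        ext p; simp
      rw [this]
      exact isClosed_iInter fun a => isClosed_le continuous_const (continuous_apply a)
    have h2 : IsClosed {p : V n → ℝ | (∑ a : V n, p a) = 1} :=
      isClosed_eq (continuous_finset_sum _ fun a _ => continuous_apply a) continuous_const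
    exact h1.inter h2
  apply le_antisymm
  · refine closure_minimal ?_ hΔclosed
    rintro p ⟨h1, h2, _⟩; exact ⟨h1, h2⟩
  · -- Δ ⊆ closure S
    intro p hp
    obtain ⟨hpos, hsum⟩ := hp
    rw [Metric.mem_closure_iff]
    intro ε hε
    -- the point mass at 0
    set q : V n → ℝ := fun k => if k = 0 then 1 else 0 with hq
    have hqsum : (∑ a : V n, q a) = 1 := by simp [hq]
    have hqchi : ∀ a : V n, (∑ k : V n, chi a k * q k) = 1 := by
      intro a
      have : (∑ k : V n, chi a k * q k) = chi a 0 := by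
        simp [hq, mul_ite, Finset.sum_ite_eq']
      rw [this, chi_zero_right]
    -- eigenvalues of p
    set f : V n → ℝ := fun a => ∑ k : V n, chi a k * p k with hf
    -- bad values of t
    set F : Finset ℝ := Finset.image (fun a : V n => f a / (f a - 1)) Finset.univ with hF
    set D : ℝ := ‖p - q‖ with hD
    set δ : ℝ := min (ε / (D + 1)) 1 with hδ
    have hDpos : 0 < D + 1 := by positivity
    have hδpos : 0 < δ := by
      apply lt_min
      · positivity
      · norm_num
    have hinf : (Set.Ioo (0:ℝ) δ).Infinite := Set.Ioo_infinite hδpos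
    obtain ⟨t, ht⟩ := (hinf.diff F.finite_toSet).nonempty
    obtain ⟨⟨ht0, htδ⟩, htF⟩ := ht
    have ht1 : t < 1 := lt_of_lt_of_le htδ (min_le_right _ _)
    set r : V n → ℝ := fun k => (1 - t) * p k + t * q k with hr
    refine ⟨r, ⟨?_, ?_, ?_⟩, ?_⟩
    · intro a
      have hq0 : 0 ≤ q a := by simp only [hq]; positivity
      have hp0 := hpos a
      show (0:ℝ) ≤ (1 - t) * p a + t * q a
      nlinarith
    · rw [show (∑ a : V n, r a) = (1 - t) * (∑ a : V n, p a) + t * (∑ a : V n, q a) by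
        simp [hr, Finset.sum_add_distrib, Finset.mul_sum], hsum, hqsum]
      ring
    · intro a
      have hexp : (∑ k : V n, chi a k * r k)
          = (1 - t) * f a + t := by
        have : (∑ k : V n, chi a k * r k)
            = (1 - t) * (∑ k : V n, chi a k * p k) + t * (∑ k : V n, chi a k * q k) := by
          rw [Finset.mul_sum, Finset.mul_sum, ← Finset.sum_add_distrib]
          apply Finset.sum_congr rfl
          intro k _
          simp only [hr]; ring
        rw [this, hqchi a, mul_one, hf]
      rw [hexp]
      intro hcontra
      have hfa1 : f a - 1 ≠ 0 := by
        intro h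
        have : f a = 1 := by linarith
        rw [this] at hcontra
        linarith
      apply htF
      simp only [hF, Finset.coe_image, Set.mem_image, Finset.mem_coe]
      refine ⟨a, by simp, ?_⟩
      rw [div_eq_iff hfa1]
      nlinarith
    · have hpr : p - r = t • (p - q) := by
        funext k
        simp only [Pi.sub_apply, Pi.smul_apply, smul_eq_mul, hr]
        ring
      have : dist p r = t * D := by
        rw [dist_eq_norm, hpr, norm_smul, Real.norm_eq_abs, abs_of_pos ht0, hD]
      rw [this]
      have hD0 : 0 ≤ D := norm_nonneg _
      have htε : t < ε / (D + 1) := lt_of_lt_of_le htδ (min_le_left _ _)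
      have : t * (D + 1) < ε := by
        rw [← lt_div_iff₀ hDpos]; exact htε
      nlinarith
end

section
/- Exact Pauli-Lindblad parameters λ_y and λ_z for the noisy √X gate: let A > 0, γ ≥ 0, γ_φ ≥ 0, t_g = π/(2A). Let H = A·X/2, U = exp(−i·H·t_g) (matrix exponential), and let 𝓛 be the linear map on 2×2 complex matrices 𝓛(ρ) = −i·(H·ρ − ρ·H) + γ·(σ₋ ρ σ₊ − ½(σ₊σ₋·ρ + ρ·σ₊σ₋)) + γ_φ·(Z ρ Z − ρ). Define the error channel E(ρ) = U†·(exp(t_g·𝓛)(ρ))·U and its Pauli eigenvalues f_x, f_y, f_z. Then f_x = exp(−(γ/2 + 2γ_φ)·t_g) and f_y = f_z; consequently, if f_y > 0 then the Pauli-Lindblad parameters satisfy λ_y = λ_z = γ·t_g/8 + γ_φ·t_g/2. -/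
attribute [local instance] Matrix.linftyOpNormedAddCommGroup Matrix.linftyOpNormedRing
  Matrix.linftyOpNormedAlgebra

/-- The space of 2×2 complex matrices. -/
abbrev M2 : Type := Matrix (Fin 2) (Fin 2) ℂ

def Xm : M2 := !![0, 1; 1, 0]
def Ym : M2 := !![0, -Complex.I; Complex.I, 0]
def Zm : M2 := !![1, 0; 0, -1]

/-- The Hadamard jump operator `L_φ = (X + Z)/√2`. -/
noncomputable def Lφ : M2 := ((Real.sqrt 2 : ℝ) : ℂ)⁻¹ • (Xm + Zm)

/-- The lowering operator `σ₋`. -/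
def σm : M2 := !![0, 1; 0, 0]

/-- The raising operator `σ₊`. -/
def σp : M2 := !![0, 0; 1, 0]


/-! `𝓛` has `X` as an eigenvector with eigenvalue `-(γ/2 + 2γ_φ)` and leaves `span {Y, Z}`
invariant, so `Q = exp (t_g 𝓛)` does too: `Q X = e^{-(γ/2 + 2γ_φ) t_g} X`, `Q Y = a Y + b Z`,
`Q Z = c Y + d Z`. Since `A t_g = π/2`, `U = (1 - iX)/√2`, and `U† (·) U` fixes `X` and sends
`Y ↦ -Z`, `Z ↦ Y`; hence `f_x = e^{-(γ/2 + 2γ_φ) t_g}`, `f_y = b` and `f_z = -c`. Finally `Q`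
commutes with `𝓛`, and comparing the `Y`-components of `𝓛 (Q Y)` and `Q (𝓛 Y)` gives
`A (b + c) = 0`. -/

open NormedSpace Complex
open scoped Matrix

section OperatorExp

variable {𝕂 E : Type*} [RCLike 𝕂] [NormedAddCommGroup E] [NormedSpace 𝕂 E]

theorem apply_exp_smul_apply (T : E →L[𝕂] E) (c : 𝕂) (v : E) :
    T (exp (c • T) v) = exp (c • T) (T v) :=
  congr($(((Commute.refl T).smul_right c).exp_right.eq) v)

variable [CompleteSpace E]

theorem hasSum_exp_apply (T : E →L[𝕂] E) (v : E) :
    HasSum (fun n => (n.factorial⁻¹ : 𝕂) • (T ^ n) v) (exp T v) :=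
  (exp_series_hasSum_exp' (𝕂 := 𝕂) T).mapL (ContinuousLinearMap.apply 𝕂 E v)

theorem exp_apply_of_apply_eq_smul {T : E →L[𝕂] E} {v : E} {c : 𝕂} (hv : T v = c • v) :
    exp T v = exp c • v := by
  have hpow : ∀ n, (T ^ n) v = c ^ n • v := by
    intro n
    induction n with
    | zero => simp
    | succ n ih => rw [pow_succ', mul_apply_eq_comp, ih, map_smul, hv, smul_smul, pow_succ]
  refine (hasSum_exp_apply T v).unique ?_
  simp_rw [hpow, smul_smul]
  exact (exp_series_hasSum_exp' (𝕂 := 𝕂) c).smul_const v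

theorem exp_apply_mem {T : E →L[𝕂] E} {p : Submodule 𝕂 E} (hp : IsClosed (p : Set E))
    (hT : ∀ v ∈ p, T v ∈ p) {v : E} (hv : v ∈ p) : exp T v ∈ p := by
  have hpow : ∀ n, (T ^ n) v ∈ p := by
    intro n
    induction n with
    | zero => simpa using hv
    | succ n ih => rw [pow_succ', mul_apply_eq_comp]; exact hT _ ih
  exact hp.mem_of_tendsto (hasSum_exp_apply T v)
    (.of_forall fun s => p.sum_mem fun n _ => p.smul_mem _ (hpow n))

end OperatorExp

theorem exp_smul_of_mul_self_eq_one {𝔸 : Type*} [NormedRing 𝔸] [NormedAlgebra ℂ 𝔸]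
    [CompleteSpace 𝔸] {x : 𝔸} (hx : x * x = 1) (c : ℂ) :
    exp (c • x) = cosh c • (1 : 𝔸) + sinh c • x := by
  have hpow : ∀ n, x ^ (2 * n) = 1 := fun n => by rw [pow_mul, sq, hx, one_pow]
  refine (exp_series_hasSum_exp' (𝕂 := ℂ) (c • x)).unique (.even_add_odd ?_ ?_)
  · convert (hasSum_cosh c).smul_const (1 : 𝔸) using 2 with n
    rw [smul_pow, hpow, smul_smul, div_eq_inv_mul]
  · convert (hasSum_sinh c).smul_const x using 2 with n
    rw [smul_pow, pow_succ x, hpow, one_mul, smul_smul, div_eq_inv_mul]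

theorem Xm_mul_self : Xm * Xm = 1 := by
  ext i j; fin_cases i <;> fin_cases j <;> simp [Xm]

theorem half_trace_Xm_mul (α : ℂ) : 1 / 2 * (Xm * α • Xm).trace = α := by
  rw [Matrix.mul_smul, Xm_mul_self, Matrix.trace_smul, Matrix.trace_one]
  simp; ring

theorem half_trace_Ym_mul (α β : ℂ) : 1 / 2 * (Ym * (α • Ym + β • Zm)).trace = α := by
  simp [Matrix.trace_fin_two, Ym, Zm]; ring_nf; simp [I_sq]

theorem half_trace_Zm_mul (α β : ℂ) : 1 / 2 * (Zm * (α • Ym + β • Zm)).trace = β := by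
  simp [Matrix.trace_fin_two, Ym, Zm]; ring

noncomputable def sqrtXGate : M2 := ((√2 / 2 : ℝ) : ℂ) • (1 - I • Xm)

theorem exp_sqrtX_hamiltonian_eq_sqrtXGate {A : ℝ} (hA : A ≠ 0) :
    exp ((-I * ((Real.pi / (2 * A) : ℝ) : ℂ)) • (((A : ℂ) / 2) • Xm)) = sqrtXGate := by
  have hθ : (-I * ((Real.pi / (2 * A) : ℝ) : ℂ)) • (((A : ℂ) / 2) • Xm)
      = ((-(Real.pi / 4) : ℝ) * I) • Xm := by
    have : (A : ℂ) ≠ 0 := ofReal_ne_zero.2 hA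
    rw [smul_smul]; congr 1; push_cast; field_simp; norm_num
  rw [hθ]
  refine (exp_smul_of_mul_self_eq_one Xm_mul_self _).trans ?_
  rw [cosh_mul_I, sinh_mul_I, ← ofReal_cos, ← ofReal_sin, Real.cos_neg, Real.sin_neg,
    Real.cos_pi_div_four, Real.sin_pi_div_four, sqrtXGate]
  ext i j; fin_cases i <;> fin_cases j <;> simp [Xm]

theorem sqrtXGate_conj (P : M2) :
    sqrtXGateᴴ * P * sqrtXGate = (1 / 2 : ℂ) • ((1 + I • Xm) * P * (1 - I • Xm)) := by
  have hX : Xmᴴ = Xm := by ext i j; fin_cases i <;> fin_cases j <;> simp [Xm]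
  have hs : ((√2 / 2 : ℝ) : ℂ) * ((√2 / 2 : ℝ) : ℂ) = 1 / 2 := by
    rw [← ofReal_mul, div_mul_div_comm, Real.mul_self_sqrt zero_le_two]; norm_num
  simp only [sqrtXGate, Matrix.conjTranspose_smul, Matrix.conjTranspose_sub,
    Matrix.conjTranspose_one, hX, Complex.star_def, conj_ofReal, conj_I, neg_smul, sub_neg_eq_add]
  rw [Matrix.smul_mul, Matrix.smul_mul, Matrix.mul_smul, smul_smul, hs]

theorem sqrtXGate_conj_Xm : sqrtXGateᴴ * Xm * sqrtXGate = Xm := by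
  rw [sqrtXGate_conj]
  ext i j; fin_cases i <;> fin_cases j <;> simp [Xm, Matrix.mul_apply] <;> ring

theorem sqrtXGate_conj_Ym_Zm (a b : ℂ) :
    sqrtXGateᴴ * (a • Ym + b • Zm) * sqrtXGate = b • Ym + (-a) • Zm := by
  rw [sqrtXGate_conj]
  ext i j; fin_cases i <;> fin_cases j <;>
    simp [Xm, Ym, Zm, Matrix.mul_apply] <;> ring_nf <;> simp [I_sq]

noncomputable def sqrtXLindbladian (A γ γφ : ℝ) (ρ : M2) : M2 :=
  (-I) • (((A : ℂ) / 2) • Xm * ρ - ρ * (((A : ℂ) / 2) • Xm))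
    + (γ : ℂ) • (σm * ρ * σp - (1 / 2 : ℂ) • (σp * σm * ρ + ρ * (σp * σm)))
    + (γφ : ℂ) • (Zm * ρ * Zm - ρ)

section Lindbladian

variable {A γ γφ : ℝ}

theorem sqrtXLindbladian_Xm :
    sqrtXLindbladian A γ γφ Xm = (-((γ : ℂ) / 2 + 2 * γφ)) • Xm := by
  ext i j; fin_cases i <;> fin_cases j <;>
    simp [sqrtXLindbladian, Xm, Zm, σm, σp] <;> ring

theorem sqrtXLindbladian_Ym :
    sqrtXLindbladian A γ γφ Ym = (-((γ : ℂ) / 2 + 2 * γφ)) • Ym + (A : ℂ) • Zm := by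
  ext i j; fin_cases i <;> fin_cases j <;>
    simp [sqrtXLindbladian, Xm, Ym, Zm, σm, σp] <;> ring_nf <;> simp [I_sq]

theorem sqrtXLindbladian_Zm :
    sqrtXLindbladian A γ γφ Zm = (-(A : ℂ)) • Ym + (-(γ : ℂ)) • Zm := by
  ext i j; fin_cases i <;> fin_cases j <;>
    simp [sqrtXLindbladian, Xm, Ym, Zm, σm, σp] <;> ring_nf

variable {𝓛 : M2 →L[ℂ] M2}

theorem mapsTo_span_Ym_Zm (h𝓛 : ∀ ρ, 𝓛 ρ = sqrtXLindbladian A γ γφ ρ) {v : M2}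
    (hv : v ∈ Submodule.span ℂ {Ym, Zm}) : 𝓛 v ∈ Submodule.span ℂ {Ym, Zm} := by
  obtain ⟨a, b, rfl⟩ := Submodule.mem_span_pair.1 hv
  rw [map_add, map_smul, map_smul, h𝓛, h𝓛, sqrtXLindbladian_Ym, sqrtXLindbladian_Zm]
  have hY : Ym ∈ Submodule.span ℂ {Ym, Zm} := Submodule.subset_span (by simp)
  have hZ : Zm ∈ Submodule.span ℂ {Ym, Zm} := Submodule.subset_span (by simp)
  apply_rules [Submodule.add_mem, Submodule.smul_mem]

theorem neg_coeff_of_commute (h𝓛 : ∀ ρ, 𝓛 ρ = sqrtXLindbladian A γ γφ ρ) (hA : A ≠ 0)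
    {Q : M2 →L[ℂ] M2} (hQ : ∀ v, 𝓛 (Q v) = Q (𝓛 v)) {a b c d : ℂ}
    (hY : Q Ym = a • Ym + b • Zm) (hZ : Q Zm = c • Ym + d • Zm) : c = -b := by
  have h := congr($(hQ Ym) 0 1)
  rw [hY, h𝓛 Ym, sqrtXLindbladian_Ym, map_add, map_add, map_smul, map_smul, map_smul,
    map_smul, h𝓛, h𝓛, sqrtXLindbladian_Ym, sqrtXLindbladian_Zm, hY, hZ] at h
  simp [Ym, Zm] at h
  have hAI : (A : ℂ) * I ≠ 0 := mul_ne_zero (ofReal_ne_zero.2 hA) I_ne_zero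
  exact mul_left_cancel₀ hAI (by linear_combination h)

end Lindbladian

theorem sqrtX_gate_PL_parameters_general (A γ γφ tg : ℝ)
    (hA : 0 < A) (htg : tg = Real.pi / (2 * A))
    (H : M2) (hH : H = ((A : ℂ) / 2) • Xm)
    (U : M2) (hU : U = NormedSpace.exp ((-Complex.I * (tg : ℂ)) • H))
    (𝓛 : M2 →L[ℂ] M2)
    (h𝓛 : ∀ ρ : M2, 𝓛 ρ = (-Complex.I) • (H * ρ - ρ * H)
        + (γ : ℂ) • (σm * ρ * σp - (1 / 2 : ℂ) • (σp * σm * ρ + ρ * (σp * σm)))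
        + (γφ : ℂ) • (Zm * ρ * Zm - ρ))
    (E : M2 → M2)
    (hE : ∀ ρ : M2, E ρ = U.conjTranspose * (@NormedSpace.exp _ _ _ (@NonUnitalSeminormedRing.toIsTopologicalRing _
      ContinuousLinearMap.toSeminormedRing.toNonUnitalSeminormedRing) (tg • 𝓛) ρ) * U)
    (fx fy fz : ℝ)
    (hfx : (fx : ℂ) = (1 / 2 : ℂ) * Matrix.trace (Xm * E Xm))
    (hfy : (fy : ℂ) = (1 / 2 : ℂ) * Matrix.trace (Ym * E Ym))
    (hfz : (fz : ℂ) = (1 / 2 : ℂ) * Matrix.trace (Zm * E Zm)) :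
    fx = Real.exp (-(γ / 2 + 2 * γφ) * tg) ∧
    fy = fz ∧
    (0 < fy →
      (1 / 4 : ℝ) * (-Real.log fx + Real.log fy - Real.log fz)
          = γ * tg / 8 + γφ * tg / 2 ∧
      (1 / 4 : ℝ) * (-Real.log fx - Real.log fy + Real.log fz)
          = γ * tg / 8 + γφ * tg / 2) := by
  subst hH
  have hL : ∀ ρ, 𝓛 ρ = sqrtXLindbladian A γ γφ ρ := h𝓛
  have hsmul : tg • 𝓛 = (tg : ℂ) • 𝓛 := by ext ρ : 1; exact (coe_smul tg (𝓛 ρ)).symm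
  have hUg : U = sqrtXGate := by rw [hU, htg, exp_sqrtX_hamiltonian_eq_sqrtXGate hA.ne']
  simp only [hsmul, hUg] at hE
  -- Instance search cannot elaborate `exp` on `M2 →L[ℂ] M2` (the product topology of `M2` is
  -- not syntactically its norm topology), so `exp ((tg : ℂ) • 𝓛)` enters only through `hE` and
  -- the general lemmas; `change` bridges the two coercions of `(tg : ℂ) • 𝓛` to functions.
  have hQX := exp_apply_of_apply_eq_smul (T := (tg : ℂ) • 𝓛) (v := Xm)
    (c := -(γ / 2 + 2 * γφ) * tg) (by
      change (tg : ℂ) • 𝓛 Xm = _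
      rw [hL, sqrtXLindbladian_Xm, smul_smul, mul_comm])
  have hspan (v : M2) (hv : v ∈ Submodule.span ℂ {Ym, Zm}) := exp_apply_mem (T := (tg : ℂ) • 𝓛)
    (Submodule.closed_of_finiteDimensional _)
    (fun w hw => Submodule.smul_mem _ _ (mapsTo_span_Ym_Zm hL hw)) hv
  obtain ⟨a, b, hQY⟩ := Submodule.mem_span_pair.1 (hspan Ym (Submodule.subset_span (by simp)))
  obtain ⟨c, d, hQZ⟩ := Submodule.mem_span_pair.1 (hspan Zm (Submodule.subset_span (by simp)))
  have hcb : c = -b :=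
    neg_coeff_of_commute hL hA.ne' (apply_exp_smul_apply 𝓛 tg) hQY.symm hQZ.symm
  have hfx' : fx = Real.exp (-(γ / 2 + 2 * γφ) * tg) := by
    have : (fx : ℂ) = Complex.exp (-(γ / 2 + 2 * γφ) * tg) := by
      rw [hfx, hE, hQX, Matrix.mul_smul, Matrix.smul_mul, sqrtXGate_conj_Xm, half_trace_Xm_mul,
        exp_eq_exp_ℂ]
    exact_mod_cast this
  have hfy' : (fy : ℂ) = b := by
    rw [hfy, hE, ← hQY, sqrtXGate_conj_Ym_Zm, half_trace_Ym_mul]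
  have hfz' : (fz : ℂ) = b := by
    rw [hfz, hE, ← hQZ, sqrtXGate_conj_Ym_Zm, half_trace_Zm_mul, hcb, neg_neg]
  have hfyz : fy = fz := by exact_mod_cast hfy'.trans hfz'.symm
  refine ⟨hfx', hfyz, fun _ => ?_⟩
  rw [hfx', Real.log_exp, hfyz]
  constructor <;> ring

theorem sqrtX_gate_PL_parameters (A γ γφ tg : ℝ)
    (hA : 0 < A) (hγ : 0 ≤ γ) (hγφ : 0 ≤ γφ) (htg : tg = Real.pi / (2 * A))
    (H : M2) (hH : H = ((A : ℂ) / 2) • Xm)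
    (U : M2) (hU : U = NormedSpace.exp ((-Complex.I * (tg : ℂ)) • H))
    (𝓛 : M2 →L[ℂ] M2)
    (h𝓛 : ∀ ρ : M2, 𝓛 ρ = (-Complex.I) • (H * ρ - ρ * H)
        + (γ : ℂ) • (σm * ρ * σp - (1 / 2 : ℂ) • (σp * σm * ρ + ρ * (σp * σm)))
        + (γφ : ℂ) • (Zm * ρ * Zm - ρ))
    (E : M2 → M2)
    (hE : ∀ ρ : M2, E ρ = U.conjTranspose * (@NormedSpace.exp _ _ _ (@NonUnitalSeminormedRing.toIsTopologicalRing _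
      ContinuousLinearMap.toSeminormedRing.toNonUnitalSeminormedRing) (tg • 𝓛) ρ) * U)
    (fx fy fz : ℝ)
    (hfx : (fx : ℂ) = (1 / 2 : ℂ) * Matrix.trace (Xm * E Xm))
    (hfy : (fy : ℂ) = (1 / 2 : ℂ) * Matrix.trace (Ym * E Ym))
    (hfz : (fz : ℂ) = (1 / 2 : ℂ) * Matrix.trace (Zm * E Zm)) :
    fx = Real.exp (-(γ / 2 + 2 * γφ) * tg) ∧
    fy = fz ∧
    (0 < fy →
      (1 / 4 : ℝ) * (-Real.log fx + Real.log fy - Real.log fz)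
          = γ * tg / 8 + γφ * tg / 2 ∧
      (1 / 4 : ℝ) * (-Real.log fx - Real.log fy + Real.log fz)
          = γ * tg / 8 + γφ * tg / 2) :=
  sqrtX_gate_PL_parameters_general A γ γφ tg hA htg H hH U hU 𝓛 h𝓛 E hE fx fy fz hfx hfy hfz
end
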